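/- Discrete uniqueness: Let b_n : ℝ → ℝ satisfy b_n(s) - b_n(r) ≥ b̄(s-r) for r ≤ s with b̄ > 0, let a_{ik} ≥ a₀ > 0, |b_{ik}| ≤ ‖b‖_∞, |c_{ik}| ≤ ‖c‖_∞. Suppose v, ṽ ∈ ℝ^{m+1} both satisfy, for all η ∈ ℝ^{m+1}, the identity Σ_{i=0}^{m-1} h[ (b_n(v_i) - b_n(w_i))/τ · η_i + a_{ik} v_{ix} η_{ix} + b_{ik} v_i η_{ix} + c_{ik} v_i η_i ] = Σ_{i=0}^{m-1} h F_i η_i with the same data w and F (where v_{ix} = (v_{i+1} - v_i)/h). If τ < b̄/(‖c‖_∞ + ‖b‖²_∞/(2a₀)), then v = ṽ. -/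
import Mathlib


set_option maxHeartbeats 1000000 in
/-- uniqueness of the discrete state vector: two solutions of the
weak discrete identity with the same data coincide, provided the time step τ is
small enough: τ < b̄/(‖c‖_∞ + ‖b‖²_∞/(2a₀)). -/
theorem discrete_uniqueness
    (m : ℕ) (hm : 0 < m) (h τ a0 bbar Bb Cc : ℝ)
    (hh : 0 < h) (hτ : 0 < τ) (ha0 : 0 < a0) (hbbar : 0 < bbar)
    (bn : ℝ → ℝ)
    (hbn : ∀ r s : ℝ, r ≤ s → bbar * (s - r) ≤ bn s - bn r)
    (a b c F : Fin m → ℝ) (w : Fin m → ℝ)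
    (ha : ∀ i, a0 ≤ a i) (hb : ∀ i, |b i| ≤ Bb) (hc : ∀ i, |c i| ≤ Cc)
    (v vt : Fin (m + 1) → ℝ)
    (hv : ∀ η : Fin (m + 1) → ℝ,
      ∑ i : Fin m, h * ((bn (v i.castSucc) - bn (w i)) / τ * η i.castSucc
        + a i * ((v i.succ - v i.castSucc) / h) * ((η i.succ - η i.castSucc) / h)
        + b i * v i.castSucc * ((η i.succ - η i.castSucc) / h)
        + c i * v i.castSucc * η i.castSucc)
      = ∑ i : Fin m, h * F i * η i.castSucc)
    (hvt : ∀ η : Fin (m + 1) → ℝ,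
      ∑ i : Fin m, h * ((bn (vt i.castSucc) - bn (w i)) / τ * η i.castSucc
        + a i * ((vt i.succ - vt i.castSucc) / h) * ((η i.succ - η i.castSucc) / h)
        + b i * vt i.castSucc * ((η i.succ - η i.castSucc) / h)
        + c i * vt i.castSucc * η i.castSucc)
      = ∑ i : Fin m, h * F i * η i.castSucc)
    (hτsmall : τ < bbar / (Cc + Bb ^ 2 / (2 * a0))) :
    v = vt := by
  obtain ⟨u, hu⟩ : ∃ u : Fin (m + 1) → ℝ, u = fun j => v j - vt j := ⟨_, rfl⟩
  -- positivity of the constant D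
  have hCc : 0 ≤ Cc := (abs_nonneg _).trans (hc ⟨0, hm⟩)
  have hBb : 0 ≤ Bb := (abs_nonneg _).trans (hb ⟨0, hm⟩)
  obtain ⟨D, hD⟩ : ∃ D : ℝ, D = Cc + Bb ^ 2 / (2 * a0) := ⟨_, rfl⟩
  rw [← hD] at hτsmall
  have hD0 : 0 ≤ D := by rw [hD]; positivity
  have hDpos : 0 < D := by
    rcases hD0.lt_or_eq with h' | h'
    · exact h'
    · rw [← h', div_zero] at hτsmall; linarith
  have hDlt : D < bbar / τ := by
    rw [lt_div_iff₀ hτ]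
    have := (lt_div_iff₀ hDpos).mp hτsmall
    nlinarith
  -- the key identity for the difference u
  have key : ∑ i : Fin m,
      h * ((bn (v i.castSucc) - bn (vt i.castSucc)) / τ * u i.castSucc
        + a i * ((u i.succ - u i.castSucc) / h) * ((u i.succ - u i.castSucc) / h)
        + b i * u i.castSucc * ((u i.succ - u i.castSucc) / h)
        + c i * u i.castSucc * u i.castSucc) = 0 := by
    have h1 := hv u
    have h2 := hvt u
    have h3 : ∑ i : Fin m,
        (h * ((bn (v i.castSucc) - bn (w i)) / τ * u i.castSucc
          + a i * ((v i.succ - v i.castSucc) / h) * ((u i.succ - u i.castSucc) / h)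
          + b i * v i.castSucc * ((u i.succ - u i.castSucc) / h)
          + c i * v i.castSucc * u i.castSucc)
        - h * ((bn (vt i.castSucc) - bn (w i)) / τ * u i.castSucc
          + a i * ((vt i.succ - vt i.castSucc) / h) * ((u i.succ - u i.castSucc) / h)
          + b i * vt i.castSucc * ((u i.succ - u i.castSucc) / h)
          + c i * vt i.castSucc * u i.castSucc)) = 0 := by
      rw [Finset.sum_sub_distrib, h1, h2, sub_self]
    rw [← h3]
    apply Finset.sum_congr rfl
    intro i _
    simp only [hu]
    ring
  -- termwise lower bound
  have hterm : ∀ i : Fin m,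
      h * ((bbar / τ - D) * u i.castSucc ^ 2
        + a0 / 2 * ((u i.succ - u i.castSucc) / h) ^ 2)
      ≤ h * ((bn (v i.castSucc) - bn (vt i.castSucc)) / τ * u i.castSucc
        + a i * ((u i.succ - u i.castSucc) / h) * ((u i.succ - u i.castSucc) / h)
        + b i * u i.castSucc * ((u i.succ - u i.castSucc) / h)
        + c i * u i.castSucc * u i.castSucc) := by
    intro i
    have hxu : u i.castSucc = v i.castSucc - vt i.castSucc := by simp [hu]
    set x : ℝ := u i.castSucc with hx
    set y : ℝ := (u i.succ - u i.castSucc) / h with hy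
    clear_value x y
    apply mul_le_mul_of_nonneg_left _ hh.le
    -- monotonicity piece
    have hmono : bbar * x ^ 2 ≤ (bn (v i.castSucc) - bn (vt i.castSucc)) * x := by
      rcases le_total (vt i.castSucc) (v i.castSucc) with hle | hle
      · have h1 := hbn _ _ hle
        have hx0 : 0 ≤ x := by rw [hxu]; linarith
        have h2 : bbar * x ≤ bn (v i.castSucc) - bn (vt i.castSucc) := by
          rw [hxu]; linarith
        nlinarith [h2, hx0]
      · have h1 := hbn _ _ hle
        have hx0 : 0 ≤ -x := by rw [hxu]; linarith
        have h2 : bbar * (-x) ≤ bn (vt i.castSucc) - bn (v i.castSucc) := by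
          rw [hxu]; linarith
        nlinarith [h2, hx0]
    have hdiv : bbar / τ * x ^ 2 ≤ (bn (v i.castSucc) - bn (vt i.castSucc)) / τ * x := by
      rw [div_mul_eq_mul_div, div_mul_eq_mul_div, div_le_div_iff₀ hτ hτ]
      nlinarith [hmono]
    have haa : a0 * y ^ 2 ≤ a i * y * y := by
      nlinarith [ha i, sq_nonneg y]
    have hbb : -(a0 / 2 * y ^ 2 + Bb ^ 2 / (2 * a0) * x ^ 2) ≤ b i * x * y := by
      have h1 := abs_le.mp (hb i)
      have h2 : (b i) ^ 2 ≤ Bb ^ 2 := by nlinarith [sq_abs (b i), sq_nonneg (|b i| + Bb)]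
      rw [neg_le, ← sub_nonneg]
      have expand : a0 / 2 * y ^ 2 + Bb ^ 2 / (2 * a0) * x ^ 2 - -(b i * x * y)
          = ((a0 * y + b i * x) ^ 2 + (Bb ^ 2 - (b i) ^ 2) * x ^ 2) / (2 * a0) := by
        field_simp
        ring
      rw [expand]
      have h3 : 0 ≤ (a0 * y + b i * x) ^ 2 + (Bb ^ 2 - (b i) ^ 2) * x ^ 2 := by
        nlinarith [sq_nonneg (a0 * y + b i * x), sq_nonneg x, h2]
      exact div_nonneg h3 (by positivity)
    have hcc : -(Cc * x ^ 2) ≤ c i * x * x := by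
      have h1 := abs_le.mp (hc i)
      have h3 : (-Cc) * x ^ 2 ≤ c i * x ^ 2 :=
        mul_le_mul_of_nonneg_right h1.1 (sq_nonneg x)
      nlinarith [h3]
    rw [hD]
    nlinarith [hdiv, haa, hbb, hcc]
  -- each lower-bound term is nonneg and the sum is ≤ 0, hence each is 0
  have hcoef : 0 < bbar / τ - D := by linarith
  have hsumle : ∑ i : Fin m, h * ((bbar / τ - D) * u i.castSucc ^ 2
      + a0 / 2 * ((u i.succ - u i.castSucc) / h) ^ 2) ≤ 0 := by
    rw [← key]
    exact Finset.sum_le_sum fun i _ => hterm i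
  have hnn : ∀ i : Fin m, (0:ℝ) ≤ h * ((bbar / τ - D) * u i.castSucc ^ 2
      + a0 / 2 * ((u i.succ - u i.castSucc) / h) ^ 2) := by
    intro i
    positivity
  have hzero : ∀ i : Fin m, h * ((bbar / τ - D) * u i.castSucc ^ 2
      + a0 / 2 * ((u i.succ - u i.castSucc) / h) ^ 2) = 0 := by
    intro i
    have := (Finset.sum_eq_zero_iff_of_nonneg (fun i _ => hnn i)).mp
      (le_antisymm hsumle (Finset.sum_nonneg (fun i _ => hnn i)))
    exact this i (Finset.mem_univ i)
  have hin : ∀ i : Fin m, (bbar / τ - D) * u i.castSucc ^ 2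
      + a0 / 2 * ((u i.succ - u i.castSucc) / h) ^ 2 = 0 := by
    intro i
    rcases mul_eq_zero.mp (hzero i) with h' | h'
    · exact absurd h' (ne_of_gt hh)
    · exact h'
  have hucast : ∀ i : Fin m, u i.castSucc = 0 := by
    intro i
    have hx2 : u i.castSucc ^ 2 ≤ 0 := by
      nlinarith [hin i, sq_nonneg ((u i.succ - u i.castSucc) / h), hcoef, ha0]
    exact sq_eq_zero_iff.mp (le_antisymm hx2 (sq_nonneg _))
  have husucc : ∀ i : Fin m, u i.succ = 0 := by
    intro i
    have hy2 : ((u i.succ - u i.castSucc) / h) ^ 2 ≤ 0 := by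
      nlinarith [hin i, sq_nonneg (u i.castSucc), hcoef, ha0]
    have hy0 : (u i.succ - u i.castSucc) / h = 0 :=
      sq_eq_zero_iff.mp (le_antisymm hy2 (sq_nonneg _))
    have h2 := hucast i
    have h3 : u i.succ - u i.castSucc = 0 :=
      (div_eq_zero_iff.mp hy0).resolve_right (ne_of_gt hh)
    linarith
  funext j
  have huj : u j = 0 := by
    rcases Fin.eq_castSucc_or_eq_last j with ⟨i, rfl⟩ | rfl
    · exact hucast i
    · have heq : (Fin.last m) = (⟨m - 1, Nat.sub_lt hm one_pos⟩ : Fin m).succ := by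
        apply Fin.ext
        simp only [Fin.val_last, Fin.val_succ]
        omega
      rw [heq]
      exact husucc _
  have hvj : v j - vt j = 0 := by simpa [hu] using huj
  linarith
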